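/- Let d, L_q, W_q ∈ ℕ with L_q ≥ 1 and let R_q ≥ 1. Let q_θ, q_{θ̃} : ℝ^d → ℝ be realizations of tanh neural networks with a common architecture of depth L_q and width at most W_q, with parameter vectors θ, θ̃ each bounded by R_q in the ℓ∞ norm. Then for every x ∈ ℝ^d with ‖x‖_{ℓ∞} ≤ 1, | ‖∇q_θ(x)‖_{ℓ2}² − ‖∇q_{θ̃}(x)‖_{ℓ2}² | ≤ 2 d L_q² R_q^{3L_q − 2} W_q^{3L_q − 3} ‖θ − θ̃‖_{ℓ∞}. -/

import Mathlib

noncomputable def nnHidden (dims : ℕ → ℕ)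
    (A : ∀ ℓ : ℕ, Matrix (Fin (dims (ℓ + 1))) (Fin (dims ℓ)) ℝ)
    (b : ∀ ℓ : ℕ, Fin (dims (ℓ + 1)) → ℝ)
    (x : Fin (dims 0) → ℝ) : (ℓ : ℕ) → Fin (dims ℓ) → ℝ
  | 0 => x
  | ℓ + 1 => fun i => Real.tanh ((∑ j, A ℓ i j * nnHidden dims A b x ℓ j) + b ℓ i)

noncomputable def nnRealize (dims : ℕ → ℕ) (L : ℕ)
    (A : ∀ ℓ : ℕ, Matrix (Fin (dims (ℓ + 1))) (Fin (dims ℓ)) ℝ)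
    (b : ∀ ℓ : ℕ, Fin (dims (ℓ + 1)) → ℝ)
    (x : Fin (dims 0) → ℝ) : Fin (dims L) → ℝ :=
  match L with
  | 0 => x
  | m + 1 => fun i => (∑ j, A m i j * nnHidden dims A b x m j) + b m i

set_option maxHeartbeats 1000000

namespace GPL
noncomputable def sech2 (t : ℝ) : ℝ := (Real.cosh t ^ 2)⁻¹

lemma cosh_sq_ne (t : ℝ) : Real.cosh t ^ 2 ≠ 0 := by positivity

lemma hasDerivAt_tanh (t : ℝ) : HasDerivAt Real.tanh (sech2 t) t := by
  have h := (Real.hasDerivAt_sinh t).div (Real.hasDerivAt_cosh t) (ne_of_gt (Real.cosh_pos t))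
  have e1 : (Real.cosh t * Real.cosh t - Real.sinh t * Real.sinh t) / Real.cosh t ^ 2 = sech2 t := by
    rw [show Real.cosh t * Real.cosh t - Real.sinh t * Real.sinh t = Real.cosh t ^ 2 - Real.sinh t ^ 2 by ring,
      Real.cosh_sq_sub_sinh_sq, sech2, one_div]
  have e2 : (fun y => Real.sinh y / Real.cosh y) = Real.tanh := by
    funext y; rw [Real.tanh_eq_sinh_div_cosh]
  rw [← e1, ← e2]; exact h

lemma sech2_nonneg (t : ℝ) : 0 ≤ sech2 t := by rw [sech2]; positivity

lemma sech2_le_one (t : ℝ) : sech2 t ≤ 1 := by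
  rw [sech2, inv_le_one_iff₀]
  right
  nlinarith [Real.one_le_cosh t]

lemma abs_sinh_le_cosh (t : ℝ) : |Real.sinh t| ≤ Real.cosh t := by
  rw [Real.abs_sinh, ← Real.cosh_abs t]
  nlinarith [Real.cosh_sub_sinh |t|, Real.exp_pos (-|t|)]

lemma abs_tanh_le_one (t : ℝ) : |Real.tanh t| ≤ 1 := by
  rw [Real.tanh_eq_sinh_div_cosh, abs_div, abs_of_pos (Real.cosh_pos t),
    div_le_one (Real.cosh_pos t)]
  exact abs_sinh_le_cosh t

lemma tanh_lipschitz (s t : ℝ) : |Real.tanh s - Real.tanh t| ≤ |s - t| := by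
  have := convex_univ.norm_image_sub_le_of_norm_hasDerivWithin_le
    (f := Real.tanh) (f' := sech2) (C := 1)
    (fun y _ => (hasDerivAt_tanh y).hasDerivWithinAt)
    (fun y _ => by rw [Real.norm_eq_abs, abs_of_nonneg (sech2_nonneg y)]; exact sech2_le_one y)
    (Set.mem_univ t) (Set.mem_univ s)
  simpa [Real.norm_eq_abs] using this

lemma hasDerivAt_sech2 (t : ℝ) :
    HasDerivAt sech2 (-(2 * Real.cosh t * Real.sinh t) / (Real.cosh t ^ 2) ^ 2) t := by
  have h := ((Real.hasDerivAt_cosh t).fun_pow 2).fun_inv (cosh_sq_ne t)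
  have e : (fun y => (Real.cosh y ^ 2)⁻¹) = sech2 := rfl
  rw [← e]
  convert! h using 1
  ring

lemma sech2_lipschitz (s t : ℝ) : |sech2 s - sech2 t| ≤ |s - t| := by
  have key : ∀ y : ℝ, |(-(2 * Real.cosh y * Real.sinh y) / (Real.cosh y ^ 2) ^ 2)| ≤ 1 := by
    intro y
    rw [abs_div, abs_neg]
    rw [div_le_one (by positivity)]
    have h1 := abs_sinh_le_cosh y
    have h2 := Real.one_le_cosh y
    have h3 : |2 * Real.cosh y * Real.sinh y| = 2 * Real.cosh y * |Real.sinh y| := by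
      rw [abs_mul, abs_of_pos (by positivity : (0:ℝ) < 2 * Real.cosh y)]
    rw [h3, abs_of_pos (by positivity : (0:ℝ) < (Real.cosh y ^ 2) ^ 2)]
    nlinarith [Real.cosh_pos y, abs_nonneg (Real.sinh y), sq_nonneg (|Real.sinh y| - 1),
      Real.cosh_sq' y, sq_abs (Real.sinh y)]
  have := convex_univ.norm_image_sub_le_of_norm_hasDerivWithin_le
    (f := sech2) (f' := fun y => -(2 * Real.cosh y * Real.sinh y) / (Real.cosh y ^ 2) ^ 2) (C := 1)
    (fun y _ => (hasDerivAt_sech2 y).hasDerivWithinAt)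
    (fun y _ => by rw [Real.norm_eq_abs]; exact key y)
    (Set.mem_univ t) (Set.mem_univ s)
  simpa [Real.norm_eq_abs] using this


/-- helper: sum of bounded terms -/
lemma sum_le_card {n : ℕ} (f : Fin n → ℝ) {C : ℝ} (h : ∀ j, f j ≤ C) :
    ∑ j, f j ≤ (n : ℝ) * C := by
  calc ∑ j, f j ≤ ∑ _j : Fin n, C := Finset.sum_le_sum fun j _ => h j
    _ = (n : ℝ) * C := by simp [Finset.sum_const, mul_comm]

lemma abs_sum_mul_le {n : ℕ} (a u : Fin n → ℝ) {R T : ℝ}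
    (ha : ∀ j, |a j| ≤ R) (hu : ∑ j, |u j| ≤ T) (hR : 0 ≤ R) :
    |∑ j, a j * u j| ≤ R * T := by
  calc |∑ j, a j * u j| ≤ ∑ j, |a j * u j| := Finset.abs_sum_le_sum_abs _ _
    _ ≤ ∑ j, R * |u j| := by
        refine Finset.sum_le_sum fun j _ => ?_
        rw [abs_mul]
        exact mul_le_mul_of_nonneg_right (ha j) (abs_nonneg _)
    _ = R * ∑ j, |u j| := by rw [Finset.mul_sum]
    _ ≤ R * T := mul_le_mul_of_nonneg_left hu hR

lemma abs_sum_mul_sub_le {n : ℕ} (a a' u u' : Fin n → ℝ) {R εa T E : ℝ}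
    (ha : ∀ j, |a j| ≤ R) (hda : ∀ j, |a j - a' j| ≤ εa)
    (hu' : ∑ j, |u' j| ≤ T) (hE : ∑ j, |u j - u' j| ≤ E)
    (hR : 0 ≤ R) (hεa : 0 ≤ εa) :
    |∑ j, a j * u j - ∑ j, a' j * u' j| ≤ εa * T + R * E := by
  have key : ∀ j : Fin n, |a j * u j - a' j * u' j| ≤ εa * |u' j| + R * |u j - u' j| := by
    intro j
    have h1 : a j * u j - a' j * u' j = (a j - a' j) * u' j + a j * (u j - u' j) := by ring
    rw [h1]
    refine (abs_add_le _ _).trans ?_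
    rw [abs_mul, abs_mul]
    gcongr
    · exact hda j
    · exact ha j
  calc |∑ j, a j * u j - ∑ j, a' j * u' j|
      = |∑ j, (a j * u j - a' j * u' j)| := by rw [Finset.sum_sub_distrib]
    _ ≤ ∑ j, |a j * u j - a' j * u' j| := Finset.abs_sum_le_sum_abs _ _
    _ ≤ ∑ j, (εa * |u' j| + R * |u j - u' j|) := Finset.sum_le_sum fun j _ => key j
    _ = εa * (∑ j, |u' j|) + R * ∑ j, |u j - u' j| := by
        rw [Finset.sum_add_distrib, Finset.mul_sum, Finset.mul_sum]
    _ ≤ εa * T + R * E := by gcongr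

section NN

variable (dims : ℕ → ℕ)
  (A A' : ∀ ℓ : ℕ, Matrix (Fin (dims (ℓ + 1))) (Fin (dims ℓ)) ℝ)
  (b b' : ∀ ℓ : ℕ, Fin (dims (ℓ + 1)) → ℝ)
  (x : Fin (dims 0) → ℝ) (p : Fin (dims 0))

noncomputable def preact (ℓ : ℕ) (i : Fin (dims (ℓ + 1))) : ℝ :=
  (∑ j, A ℓ i j * nnHidden dims A b x ℓ j) + b ℓ i

noncomputable def nnGrad : (ℓ : ℕ) → Fin (dims ℓ) → ℝ
  | 0 => fun j => if j = p then 1 else 0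
  | ℓ + 1 => fun i => sech2 (preact dims A b x ℓ i) * ∑ j, A ℓ i j * nnGrad ℓ j

noncomputable def nnDer : (ℓ : ℕ) → Fin (dims ℓ) → ((Fin (dims 0) → ℝ) →L[ℝ] ℝ)
  | 0 => fun i => ContinuousLinearMap.proj i
  | ℓ + 1 => fun i => sech2 (preact dims A b x ℓ i) • ∑ j, A ℓ i j • nnDer ℓ j

lemma hasFDerivAt_nnHidden : ∀ (ℓ : ℕ) (i : Fin (dims ℓ)),
    HasFDerivAt (fun y => nnHidden dims A b y ℓ i) (nnDer dims A b x ℓ i) x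
  | 0, i => by
      exact (ContinuousLinearMap.proj i :
        (Fin (dims 0) → ℝ) →L[ℝ] ℝ).hasFDerivAt
  | ℓ + 1, i => by
      have hsum : HasFDerivAt (fun y => preact dims A b y ℓ i)
          (∑ j, A ℓ i j • nnDer dims A b x ℓ j) x :=
        (HasFDerivAt.fun_sum fun j _ =>
          (hasFDerivAt_nnHidden ℓ j).const_mul (A ℓ i j)).add_const (b ℓ i)
      exact (hasDerivAt_tanh _).comp_hasFDerivAt x hsum

lemma nnDer_single : ∀ (ℓ : ℕ) (i : Fin (dims ℓ)),
    nnDer dims A b x ℓ i (Pi.single p 1) = nnGrad dims A b x p ℓ i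
  | 0, i => by simp [nnDer, nnGrad, Pi.single_apply]
  | ℓ + 1, i => by
      simp only [nnDer, nnGrad, ContinuousLinearMap.smul_apply,
        ContinuousLinearMap.sum_apply, smul_eq_mul]
      congr 1
      exact Finset.sum_congr rfl fun j _ => by rw [nnDer_single ℓ j]

variable {R W ε : ℝ} {m : ℕ}

lemma hidden_abs (hx : ∀ j, |x j| ≤ 1) : ∀ (ℓ : ℕ) (j : Fin (dims ℓ)),
    |nnHidden dims A b x ℓ j| ≤ 1
  | 0, j => hx j
  | ℓ + 1, j => abs_tanh_le_one _

lemma hidden_sum_le (hx : ∀ j, |x j| ≤ 1) (ℓ : ℕ) :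
    ∑ j, |nnHidden dims A b x ℓ j| ≤ (dims ℓ : ℝ) := by
  simpa using sum_le_card (fun j => |nnHidden dims A b x ℓ j|)
    (fun j => hidden_abs dims A b x hx ℓ j)

lemma grad_sum_zero : ∑ j, |nnGrad dims A b x p 0 j| = 1 := by
  have : ∀ j : Fin (dims 0), |nnGrad dims A b x p 0 j| = if j = p then 1 else 0 := by
    intro j
    simp only [nnGrad]
    split <;> simp
  rw [Finset.sum_congr rfl fun j _ => this j]
  simp

lemma grad_sum_le (hR : 1 ≤ R) (hW : 1 ≤ W)
    (hn : ∀ ℓ ≤ m, (dims ℓ : ℝ) ≤ W)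
    (hA : ∀ ℓ < m, ∀ i j, |A ℓ i j| ≤ R) :
    ∀ ℓ ≤ m, ∑ j, |nnGrad dims A b x p ℓ j| ≤ (R * W) ^ ℓ := by
  intro ℓ
  induction ℓ with
  | zero => intro _; rw [grad_sum_zero]; simp
  | succ ℓ ih =>
    intro hm
    have hRW : (0:ℝ) ≤ R * W := by positivity
    have hten := ih (by omega)
    have per : ∀ i : Fin (dims (ℓ+1)), |nnGrad dims A b x p (ℓ+1) i| ≤ R * (R*W)^ℓ := by
      intro i
      show |sech2 _ * ∑ j, A ℓ i j * nnGrad dims A b x p ℓ j| ≤ _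
      rw [abs_mul]
      calc |sech2 (preact dims A b x ℓ i)| * |∑ j, A ℓ i j * nnGrad dims A b x p ℓ j|
          ≤ 1 * (R * (R*W)^ℓ) := by
            refine mul_le_mul ?_ ?_ (abs_nonneg _) zero_le_one
            · rw [abs_of_nonneg (sech2_nonneg _)]; exact sech2_le_one _
            · exact abs_sum_mul_le _ _ (hA ℓ (by omega) i) hten (by linarith)
        _ = R * (R*W)^ℓ := one_mul _
    calc ∑ j, |nnGrad dims A b x p (ℓ+1) j| ≤ (dims (ℓ+1) : ℝ) * (R * (R*W)^ℓ) :=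
          sum_le_card _ per
      _ ≤ W * (R * (R*W)^ℓ) := by
          refine mul_le_mul_of_nonneg_right (hn (ℓ+1) hm) (by positivity)
      _ = (R*W)^(ℓ+1) := by ring

lemma hidden_diff (hR : 1 ≤ R) (hW : 1 ≤ W) (hε : 0 ≤ ε) (hx : ∀ j, |x j| ≤ 1)
    (hn : ∀ ℓ ≤ m, (dims ℓ : ℝ) ≤ W)
    (hA : ∀ ℓ < m, ∀ i j, |A ℓ i j| ≤ R)
    (hdA : ∀ ℓ < m, ∀ i j, |A ℓ i j - A' ℓ i j| ≤ ε)
    (hdb : ∀ ℓ < m, ∀ i, |b ℓ i - b' ℓ i| ≤ ε) :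
    ∀ ℓ ≤ m, ∑ j, |nnHidden dims A b x ℓ j - nnHidden dims A' b' x ℓ j| ≤
      (ℓ : ℝ) * (W * (W + 1)) * (R * W) ^ (ℓ - 1) * ε := by
  intro ℓ
  induction ℓ with
  | zero =>
    intro _
    have hz : ∀ j : Fin (dims 0),
        |nnHidden dims A b x 0 j - nnHidden dims A' b' x 0 j| = 0 := fun j => by
      show |x j - x j| = 0; simp
    rw [Finset.sum_congr rfl fun j _ => hz j]
    simp
  | succ ℓ ih =>
    intro hm
    have hRW : (1:ℝ) ≤ R * W := by nlinarith
    have hRWp : (1:ℝ) ≤ (R*W)^ℓ := one_le_pow₀ hRW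
    have hRWnn : (0:ℝ) ≤ (R*W)^ℓ := by positivity
    have hlnn : (0:ℝ) ≤ (ℓ:ℝ) := Nat.cast_nonneg ℓ
    have ihh := ih (by omega)
    have hzd : ∀ i : Fin (dims (ℓ+1)),
        |preact dims A b x ℓ i - preact dims A' b' x ℓ i| ≤
          (W + 1) * ε + R * ((ℓ:ℝ) * (W * (W + 1)) * (R * W) ^ (ℓ - 1) * ε) := by
      intro i
      have hsum := abs_sum_mul_sub_le (fun j => A ℓ i j) (fun j => A' ℓ i j)
        (fun j => nnHidden dims A b x ℓ j) (fun j => nnHidden dims A' b' x ℓ j)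
        (hA ℓ (by omega) i) (hdA ℓ (by omega) i)
        (hidden_sum_le dims A' b' x hx ℓ) ihh (by linarith) hε
      calc |preact dims A b x ℓ i - preact dims A' b' x ℓ i|
          = |(∑ j, A ℓ i j * nnHidden dims A b x ℓ j -
              ∑ j, A' ℓ i j * nnHidden dims A' b' x ℓ j) + (b ℓ i - b' ℓ i)| := by
            rw [preact, preact]; ring_nf
        _ ≤ |∑ j, A ℓ i j * nnHidden dims A b x ℓ j -
              ∑ j, A' ℓ i j * nnHidden dims A' b' x ℓ j| + |b ℓ i - b' ℓ i| := abs_add_le _ _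
        _ ≤ (ε * (dims ℓ : ℝ) + R * ((ℓ:ℝ) * (W * (W + 1)) * (R * W) ^ (ℓ - 1) * ε)) + ε := by
            gcongr
            exact hdb ℓ (by omega) i
        _ ≤ (ε * W + R * ((ℓ:ℝ) * (W * (W + 1)) * (R * W) ^ (ℓ - 1) * ε)) + ε := by
            gcongr
            exact hn ℓ (by omega)
        _ = (W + 1) * ε + R * ((ℓ:ℝ) * (W * (W + 1)) * (R * W) ^ (ℓ - 1) * ε) := by ring
    have stepA : R * ((ℓ:ℝ) * (W * (W + 1)) * (R * W) ^ (ℓ - 1) * ε) ≤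
        (ℓ:ℝ) * (W + 1) * (R * W) ^ ℓ * ε := by
      rcases ℓ with _ | k
      · simp
      · rw [Nat.add_sub_cancel, pow_succ]
        push_cast
        apply le_of_eq
        ring
    have key : (dims (ℓ+1) : ℝ) *
        ((W + 1) * ε + R * ((ℓ:ℝ) * (W * (W + 1)) * (R * W) ^ (ℓ - 1) * ε)) ≤
        ((ℓ:ℝ) + 1) * (W * (W + 1)) * (R * W) ^ ℓ * ε := by
      have hd : (dims (ℓ+1) : ℝ) ≤ W := hn (ℓ+1) hm
      have hin : (0:ℝ) ≤ (W + 1) * ε + R * ((ℓ:ℝ) * (W * (W + 1)) * (R * W) ^ (ℓ - 1) * ε) := by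
        have : (0:ℝ) ≤ (R*W)^(ℓ-1) := by positivity
        have h1 : (0:ℝ) ≤ (W+1)*ε := by nlinarith
        have h2 : (0:ℝ) ≤ R * ((ℓ:ℝ) * (W * (W + 1)) * (R * W) ^ (ℓ - 1) * ε) := by
          have : (0:ℝ) ≤ (ℓ:ℝ) * (W * (W + 1)) * (R * W) ^ (ℓ - 1) * ε := by
            have : (0:ℝ) ≤ W * (W+1) := by nlinarith
            positivity
          nlinarith
        linarith
      calc (dims (ℓ+1) : ℝ) *
          ((W + 1) * ε + R * ((ℓ:ℝ) * (W * (W + 1)) * (R * W) ^ (ℓ - 1) * ε))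
          ≤ W * ((W + 1) * ε + R * ((ℓ:ℝ) * (W * (W + 1)) * (R * W) ^ (ℓ - 1) * ε)) :=
            mul_le_mul_of_nonneg_right hd hin
        _ ≤ W * ((W + 1) * ε + (ℓ:ℝ) * (W + 1) * (R * W) ^ ℓ * ε) := by
            refine mul_le_mul_of_nonneg_left (by linarith [stepA]) (by linarith)
        _ = W * (W + 1) * ε * 1 + (ℓ:ℝ) * (W * (W + 1)) * (R * W) ^ ℓ * ε := by ring
        _ ≤ W * (W + 1) * ε * (R*W)^ℓ + (ℓ:ℝ) * (W * (W + 1)) * (R * W) ^ ℓ * ε := by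
            have h9 : (0:ℝ) ≤ W * (W+1) * ε :=
              mul_nonneg (mul_nonneg (by linarith) (by linarith)) hε
            nlinarith [mul_nonneg h9 (sub_nonneg.mpr hRWp)]
        _ = ((ℓ:ℝ) + 1) * (W * (W + 1)) * (R * W) ^ ℓ * ε := by ring
    calc ∑ j, |nnHidden dims A b x (ℓ+1) j - nnHidden dims A' b' x (ℓ+1) j|
        ≤ (dims (ℓ+1) : ℝ) *
          ((W + 1) * ε + R * ((ℓ:ℝ) * (W * (W + 1)) * (R * W) ^ (ℓ - 1) * ε)) := by
          refine sum_le_card _ fun i => ?_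
          calc |nnHidden dims A b x (ℓ+1) i - nnHidden dims A' b' x (ℓ+1) i|
              ≤ |preact dims A b x ℓ i - preact dims A' b' x ℓ i| :=
                tanh_lipschitz _ _
            _ ≤ _ := hzd i
      _ ≤ ((ℓ:ℝ) + 1) * (W * (W + 1)) * (R * W) ^ ℓ * ε := key
      _ = (((ℓ+1 : ℕ)) : ℝ) * (W * (W + 1)) * (R * W) ^ ((ℓ+1) - 1) * ε := by
          rw [Nat.add_sub_cancel]; push_cast; ring

lemma preact_diff (hR : 1 ≤ R) (hW : 1 ≤ W) (hε : 0 ≤ ε) (hx : ∀ j, |x j| ≤ 1)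
    (hn : ∀ ℓ ≤ m, (dims ℓ : ℝ) ≤ W)
    (hA : ∀ ℓ < m, ∀ i j, |A ℓ i j| ≤ R)
    (hdA : ∀ ℓ < m, ∀ i j, |A ℓ i j - A' ℓ i j| ≤ ε)
    (hdb : ∀ ℓ < m, ∀ i, |b ℓ i - b' ℓ i| ≤ ε) :
    ∀ ℓ < m, ∀ i, |preact dims A b x ℓ i - preact dims A' b' x ℓ i| ≤
      ((ℓ:ℝ) + 1) * (W + 1) * (R * W) ^ ℓ * ε := by
  intro ℓ hℓ i
  have hRW : (1:ℝ) ≤ R * W := by nlinarith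
  have hRWp : (1:ℝ) ≤ (R*W)^ℓ := one_le_pow₀ hRW
  have ihh := hidden_diff dims A A' b b' x hR hW hε hx hn hA hdA hdb ℓ (by omega)
  have hsum := abs_sum_mul_sub_le (fun j => A ℓ i j) (fun j => A' ℓ i j)
    (fun j => nnHidden dims A b x ℓ j) (fun j => nnHidden dims A' b' x ℓ j)
    (hA ℓ hℓ i) (hdA ℓ hℓ i)
    (hidden_sum_le dims A' b' x hx ℓ) ihh (by linarith) hε
  have stepA : R * ((ℓ:ℝ) * (W * (W + 1)) * (R * W) ^ (ℓ - 1) * ε) ≤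
      (ℓ:ℝ) * (W + 1) * (R * W) ^ ℓ * ε := by
    rcases ℓ with _ | k
    · simp
    · rw [Nat.add_sub_cancel, pow_succ]
      push_cast
      apply le_of_eq
      ring
  calc |preact dims A b x ℓ i - preact dims A' b' x ℓ i|
      = |(∑ j, A ℓ i j * nnHidden dims A b x ℓ j -
          ∑ j, A' ℓ i j * nnHidden dims A' b' x ℓ j) + (b ℓ i - b' ℓ i)| := by
        rw [preact, preact]; ring_nf
    _ ≤ |∑ j, A ℓ i j * nnHidden dims A b x ℓ j -
          ∑ j, A' ℓ i j * nnHidden dims A' b' x ℓ j| + |b ℓ i - b' ℓ i| := abs_add_le _ _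
    _ ≤ (ε * (dims ℓ : ℝ) + R * ((ℓ:ℝ) * (W * (W + 1)) * (R * W) ^ (ℓ - 1) * ε)) + ε :=
        add_le_add hsum (hdb ℓ hℓ i)
    _ ≤ (ε * W + (ℓ:ℝ) * (W + 1) * (R * W) ^ ℓ * ε) + ε :=
        add_le_add (add_le_add
          (mul_le_mul_of_nonneg_left (hn ℓ (by omega)) hε) stepA) le_rfl
    _ = (W + 1) * ε * 1 + (ℓ:ℝ) * (W + 1) * (R * W) ^ ℓ * ε := by ring
    _ ≤ (W + 1) * ε * (R*W)^ℓ + (ℓ:ℝ) * (W + 1) * (R * W) ^ ℓ * ε := by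
        have h9 : (0:ℝ) ≤ (W+1) * ε := mul_nonneg (by linarith) hε
        nlinarith [mul_nonneg h9 (sub_nonneg.mpr hRWp)]
    _ = ((ℓ:ℝ) + 1) * (W + 1) * (R * W) ^ ℓ * ε := by ring

lemma grad_diff (hR : 1 ≤ R) (hW : 1 ≤ W) (hε : 0 ≤ ε) (hx : ∀ j, |x j| ≤ 1)
    (hn : ∀ ℓ ≤ m, (dims ℓ : ℝ) ≤ W)
    (hA : ∀ ℓ < m, ∀ i j, |A ℓ i j| ≤ R)
    (hA' : ∀ ℓ < m, ∀ i j, |A' ℓ i j| ≤ R)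
    (hdA : ∀ ℓ < m, ∀ i j, |A ℓ i j - A' ℓ i j| ≤ ε)
    (hdb : ∀ ℓ < m, ∀ i, |b ℓ i - b' ℓ i| ≤ ε) :
    ∀ ℓ ≤ m, R * ∑ j, |nnGrad dims A b x p ℓ j - nnGrad dims A' b' x p ℓ j| ≤
      ((ℓ:ℝ)^2 + 2*(ℓ:ℝ)) * ((R * W) ^ ℓ)^2 * ε := by
  intro ℓ
  induction ℓ with
  | zero =>
    intro _
    have hz : ∀ j : Fin (dims 0),
        |nnGrad dims A b x p 0 j - nnGrad dims A' b' x p 0 j| = 0 := fun j => by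
      show |(if j = p then (1:ℝ) else 0) - (if j = p then (1:ℝ) else 0)| = 0; simp
    rw [Finset.sum_congr rfl fun j _ => hz j]
    simp
  | succ ℓ ih =>
    intro hm
    have hℓm : ℓ < m := by omega
    have hRW : (1:ℝ) ≤ R * W := by nlinarith
    have hP1 : (1:ℝ) ≤ (R*W)^ℓ := one_le_pow₀ hRW
    have hP0 : (0:ℝ) ≤ (R*W)^ℓ := by positivity
    have ihh := ih (by omega)
    have hgs := grad_sum_le dims A b x p hR hW hn hA ℓ (by omega)
    have hgs' := grad_sum_le dims A' b' x p hR hW hn hA' ℓ (by omega)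
    have hzd := preact_diff dims A A' b b' x hR hW hε hx hn hA hdA hdb ℓ hℓm
    set P : ℝ := (R*W)^ℓ with hPdef
    set Q : ℝ := ((ℓ:ℝ)^2 + 2*(ℓ:ℝ)) * P^2 * ε with hQdef
    set Z : ℝ := ((ℓ:ℝ) + 1) * (W + 1) * P * ε with hZdef
    have hZ0 : (0:ℝ) ≤ Z := by
      have : (0:ℝ) ≤ (ℓ:ℝ) + 1 := by positivity
      have : (0:ℝ) ≤ W + 1 := by linarith
      rw [hZdef]; positivity
    have hQ0 : (0:ℝ) ≤ Q := by
      have : (0:ℝ) ≤ (ℓ:ℝ)^2 + 2*(ℓ:ℝ) := by positivity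
      rw [hQdef]; positivity
    have per : ∀ i : Fin (dims (ℓ+1)),
        |nnGrad dims A b x p (ℓ+1) i - nnGrad dims A' b' x p (ℓ+1) i| ≤
          Z * (R * P) + (ε * P + Q) := by
      intro i
      have hS : |∑ j, A ℓ i j * nnGrad dims A b x p ℓ j| ≤ R * P :=
        abs_sum_mul_le _ _ (hA ℓ hℓm i) hgs (by linarith)
      have hSd : |∑ j, A ℓ i j * nnGrad dims A b x p ℓ j -
          ∑ j, A' ℓ i j * nnGrad dims A' b' x p ℓ j| ≤
          ε * P + R * ∑ j, |nnGrad dims A b x p ℓ j - nnGrad dims A' b' x p ℓ j| :=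
        abs_sum_mul_sub_le _ _ _ _ (hA ℓ hℓm i) (hdA ℓ hℓm i) hgs' le_rfl (by linarith) hε
      have hSd2 : |∑ j, A ℓ i j * nnGrad dims A b x p ℓ j -
          ∑ j, A' ℓ i j * nnGrad dims A' b' x p ℓ j| ≤ ε * P + Q :=
        hSd.trans (add_le_add le_rfl ihh)
      have key : nnGrad dims A b x p (ℓ+1) i - nnGrad dims A' b' x p (ℓ+1) i =
          (sech2 (preact dims A b x ℓ i) - sech2 (preact dims A' b' x ℓ i)) *
            (∑ j, A ℓ i j * nnGrad dims A b x p ℓ j)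
          + sech2 (preact dims A' b' x ℓ i) *
            (∑ j, A ℓ i j * nnGrad dims A b x p ℓ j -
             ∑ j, A' ℓ i j * nnGrad dims A' b' x p ℓ j) := by
        show sech2 (preact dims A b x ℓ i) * (∑ j, A ℓ i j * nnGrad dims A b x p ℓ j) -
          sech2 (preact dims A' b' x ℓ i) * (∑ j, A' ℓ i j * nnGrad dims A' b' x p ℓ j) = _
        ring
      rw [key]
      refine (abs_add_le _ _).trans ?_
      rw [abs_mul, abs_mul]
      have t1 : |sech2 (preact dims A b x ℓ i) - sech2 (preact dims A' b' x ℓ i)| *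
          |∑ j, A ℓ i j * nnGrad dims A b x p ℓ j| ≤ Z * (R * P) :=
        mul_le_mul ((sech2_lipschitz _ _).trans (hzd i)) hS (abs_nonneg _) hZ0
      have t2 : |sech2 (preact dims A' b' x ℓ i)| *
          |∑ j, A ℓ i j * nnGrad dims A b x p ℓ j -
            ∑ j, A' ℓ i j * nnGrad dims A' b' x p ℓ j| ≤ 1 * (ε * P + Q) := by
        refine mul_le_mul ?_ hSd2 (abs_nonneg _) zero_le_one
        rw [abs_of_nonneg (sech2_nonneg _)]
        exact sech2_le_one _
      rw [one_mul] at t2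
      exact add_le_add t1 t2
    have hsum2 : ∑ j, |nnGrad dims A b x p (ℓ+1) j - nnGrad dims A' b' x p (ℓ+1) j| ≤
        (dims (ℓ+1) : ℝ) * (Z * (R * P) + (ε * P + Q)) := sum_le_card _ per
    have hB0 : (0:ℝ) ≤ Z * (R * P) + (ε * P + Q) := by
      have h1 : (0:ℝ) ≤ Z * (R * P) := by
        have : (0:ℝ) ≤ R * P := by nlinarith
        exact mul_nonneg hZ0 this
      have h2 : (0:ℝ) ≤ ε * P := mul_nonneg hε hP0
      linarith
    have hsum3 : ∑ j, |nnGrad dims A b x p (ℓ+1) j - nnGrad dims A' b' x p (ℓ+1) j| ≤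
        W * (Z * (R * P) + (ε * P + Q)) :=
      hsum2.trans (mul_le_mul_of_nonneg_right (hn (ℓ+1) hm) hB0)
    have hfin : R * (W * (Z * (R * P) + (ε * P + Q))) ≤
        (((ℓ:ℝ)+1)^2 + 2*((ℓ:ℝ)+1)) * ((R * W) ^ (ℓ+1))^2 * ε := by
      have hpow : ((R * W) ^ (ℓ+1))^2 = P^2 * (R*W)^2 := by
        rw [hPdef, ← mul_pow, ← pow_succ]
      rw [hpow, hZdef, hQdef]
      have expand : R * (W * ((((ℓ:ℝ) + 1) * (W + 1) * P * ε) * (R * P) +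
          (ε * P + ((ℓ:ℝ)^2 + 2*(ℓ:ℝ)) * P^2 * ε))) =
          ((ℓ:ℝ) + 1) * (W + 1) * R^2 * W * P^2 * ε + R * W * P * ε
            + ((ℓ:ℝ)^2 + 2*(ℓ:ℝ)) * R * W * P^2 * ε := by ring
      rw [expand]
      have hc1 : (0:ℝ) ≤ ((ℓ:ℝ) + 1) * R^2 * W * P^2 * ε := by positivity
      have hc2 : (0:ℝ) ≤ R * W * P * ε := by positivity
      have hc3 : (0:ℝ) ≤ ((ℓ:ℝ)^2 + 2*(ℓ:ℝ)) * R * W * P^2 * ε := by positivity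
      have hT1 : ((ℓ:ℝ) + 1) * (W + 1) * R^2 * W * P^2 * ε ≤
          2 * ((ℓ:ℝ) + 1) * R^2 * W^2 * P^2 * ε := by
        nlinarith [mul_nonneg hc1 (sub_nonneg.mpr hW)]
      have hRWP : (1:ℝ) ≤ R * W * P := by nlinarith
      have hT2 : R * W * P * ε ≤ R^2 * W^2 * P^2 * ε := by
        nlinarith [mul_nonneg hc2 (sub_nonneg.mpr hRWP)]
      have hT3 : ((ℓ:ℝ)^2 + 2*(ℓ:ℝ)) * R * W * P^2 * ε ≤
          ((ℓ:ℝ)^2 + 2*(ℓ:ℝ)) * R^2 * W^2 * P^2 * ε := by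
        nlinarith [mul_nonneg hc3 (sub_nonneg.mpr hRW)]
      have goal_eq : (((ℓ:ℝ)+1)^2 + 2*((ℓ:ℝ)+1)) * (P^2 * (R*W)^2) * ε =
          2 * ((ℓ:ℝ) + 1) * R^2 * W^2 * P^2 * ε + R^2 * W^2 * P^2 * ε
            + ((ℓ:ℝ)^2 + 2*(ℓ:ℝ)) * R^2 * W^2 * P^2 * ε := by ring
      rw [goal_eq]
      linarith
    calc R * ∑ j, |nnGrad dims A b x p (ℓ+1) j - nnGrad dims A' b' x p (ℓ+1) j|
        ≤ R * (W * (Z * (R * P) + (ε * P + Q))) :=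
          mul_le_mul_of_nonneg_left hsum3 (by linarith)
      _ ≤ (((ℓ:ℝ)+1)^2 + 2*((ℓ:ℝ)+1)) * ((R * W) ^ (ℓ+1))^2 * ε := hfin
      _ = ((((ℓ+1:ℕ)):ℝ)^2 + 2*(((ℓ+1:ℕ)):ℝ)) * ((R * W) ^ (ℓ+1))^2 * ε := by
          push_cast; ring

end NN

end GPL


open GPL

/-- Lipschitz continuity, with respect to the neural network parameters, of
the squared Euclidean norm of the gradient of a scalar-output tanh neural network:
`| ‖∇q_θ(x)‖²_{ℓ²} − ‖∇q_θ̃(x)‖²_{ℓ²} | ≤ 2 d L_q² R_q^{3L_q-2} W_q^{3L_q-3} ‖θ − θ̃‖_{ℓ∞}`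
on the unit `ℓ∞` ball. -/
theorem gradient_penalty_lipschitz (d Lq Wq : ℕ) (hL : 1 ≤ Lq) (Rq : ℝ) (hR : 1 ≤ Rq)
    (dims : ℕ → ℕ)
    (h0 : dims 0 = d) (hout : dims Lq = 1)
    (hW : ∀ ℓ ≤ Lq, dims ℓ ≤ Wq)
    (A A' : ∀ ℓ : ℕ, Matrix (Fin (dims (ℓ + 1))) (Fin (dims ℓ)) ℝ)
    (b b' : ∀ ℓ : ℕ, Fin (dims (ℓ + 1)) → ℝ)
    (hA : ∀ ℓ < Lq, ∀ p r, |A ℓ p r| ≤ Rq)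
    (hb : ∀ ℓ < Lq, ∀ p, |b ℓ p| ≤ Rq)
    (hA' : ∀ ℓ < Lq, ∀ p r, |A' ℓ p r| ≤ Rq)
    (hb' : ∀ ℓ < Lq, ∀ p, |b' ℓ p| ≤ Rq)
    (qf qf' : (Fin d → ℝ) → ℝ)
    (hqf : ∀ x, qf x =
      nnRealize dims Lq A b (fun j => x (Fin.cast h0 j))
        ⟨0, lt_of_lt_of_eq Nat.one_pos hout.symm⟩)
    (hqf' : ∀ x, qf' x =
      nnRealize dims Lq A' b' (fun j => x (Fin.cast h0 j))
        ⟨0, lt_of_lt_of_eq Nat.one_pos hout.symm⟩)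
    (εθ : ℝ) (hεθ : 0 ≤ εθ)
    (hdA : ∀ ℓ < Lq, ∀ p r, |A ℓ p r - A' ℓ p r| ≤ εθ)
    (hdb : ∀ ℓ < Lq, ∀ p, |b ℓ p - b' ℓ p| ≤ εθ)
    (x : Fin d → ℝ) (hx : ∀ j, |x j| ≤ 1) :
    |(∑ j, (fderiv ℝ qf x (Pi.single j 1)) ^ 2) -
        ∑ j, (fderiv ℝ qf' x (Pi.single j 1)) ^ 2| ≤
      2 * (d : ℝ) * (Lq : ℝ) ^ 2 * Rq ^ (3 * Lq - 2) * (Wq : ℝ) ^ (3 * Lq - 3) * εθ := by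
  obtain ⟨m, rfl⟩ : ∃ m, Lq = m + 1 := ⟨Lq - 1, by omega⟩
  set i0 : Fin (dims (m + 1)) := ⟨0, lt_of_lt_of_eq Nat.one_pos hout.symm⟩ with hi0
  set y : Fin (dims 0) → ℝ := fun j => x (Fin.cast h0 j) with hy
  have hyb : ∀ j, |y j| ≤ 1 := fun j => hx _
  set π : (Fin d → ℝ) →L[ℝ] (Fin (dims 0) → ℝ) :=
    ContinuousLinearMap.pi (fun j => ContinuousLinearMap.proj (Fin.cast h0 j)) with hπ
  -- derivatives of qf and qf'
  have hqfD : HasFDerivAt qf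
      ((∑ j, A m i0 j • nnDer dims A b y m j).comp π) x := by
    have hreal : HasFDerivAt (fun yy => nnRealize dims (m+1) A b yy i0)
        (∑ j, A m i0 j • nnDer dims A b y m j) y :=
      (HasFDerivAt.fun_sum fun j _ =>
        (hasFDerivAt_nnHidden dims A b y m j).const_mul (A m i0 j)).add_const (b m i0)
    have hq : qf = (fun yy => nnRealize dims (m+1) A b yy i0) ∘ π := funext fun z => hqf z
    rw [hq]
    exact hreal.comp x π.hasFDerivAt
  have hqfD' : HasFDerivAt qf'
      ((∑ j, A' m i0 j • nnDer dims A' b' y m j).comp π) x := by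
    have hreal : HasFDerivAt (fun yy => nnRealize dims (m+1) A' b' yy i0)
        (∑ j, A' m i0 j • nnDer dims A' b' y m j) y :=
      (HasFDerivAt.fun_sum fun j _ =>
        (hasFDerivAt_nnHidden dims A' b' y m j).const_mul (A' m i0 j)).add_const (b' m i0)
    have hq : qf' = (fun yy => nnRealize dims (m+1) A' b' yy i0) ∘ π := funext fun z => hqf' z
    rw [hq]
    exact hreal.comp x π.hasFDerivAt
  have hsingle : ∀ jd : Fin d, π (Pi.single jd 1) = Pi.single (Fin.cast h0.symm jd) 1 := by
    intro jd
    funext j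
    simp only [hπ, ContinuousLinearMap.pi_apply, ContinuousLinearMap.proj_apply,
      Pi.single_apply, Fin.ext_iff, Fin.coe_cast]
  have e1 : ∀ jd : Fin d, fderiv ℝ qf x (Pi.single jd 1) =
      ∑ j, A m i0 j * nnGrad dims A b y (Fin.cast h0.symm jd) m j := by
    intro jd
    rw [hqfD.fderiv]
    rw [ContinuousLinearMap.comp_apply, hsingle jd]
    rw [ContinuousLinearMap.sum_apply]
    refine Finset.sum_congr rfl fun j _ => ?_
    rw [ContinuousLinearMap.smul_apply, nnDer_single, smul_eq_mul]
  have e1' : ∀ jd : Fin d, fderiv ℝ qf' x (Pi.single jd 1) =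
      ∑ j, A' m i0 j * nnGrad dims A' b' y (Fin.cast h0.symm jd) m j := by
    intro jd
    rw [hqfD'.fderiv]
    rw [ContinuousLinearMap.comp_apply, hsingle jd]
    rw [ContinuousLinearMap.sum_apply]
    refine Finset.sum_congr rfl fun j _ => ?_
    rw [ContinuousLinearMap.smul_apply, nnDer_single, smul_eq_mul]
  -- abbreviations for the gradients
  set g : Fin (dims 0) → ℝ := fun p => ∑ j, A m i0 j * nnGrad dims A b y p m j with hg
  set g' : Fin (dims 0) → ℝ := fun p => ∑ j, A' m i0 j * nnGrad dims A' b' y p m j with hg'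
  have hbij : Function.Bijective (fun jd : Fin d => Fin.cast h0.symm jd) := by
    simpa using (finCongr h0.symm).bijective
  have hsum1 : ∑ jd : Fin d, (fderiv ℝ qf x (Pi.single jd 1)) ^ 2 = ∑ p, (g p) ^ 2 := by
    refine Fintype.sum_bijective _ hbij _ _ fun jd => ?_
    rw [e1 jd]
  have hsum1' : ∑ jd : Fin d, (fderiv ℝ qf' x (Pi.single jd 1)) ^ 2 = ∑ p, (g' p) ^ 2 := by
    refine Fintype.sum_bijective _ hbij _ _ fun jd => ?_
    rw [e1' jd]
  rw [hsum1, hsum1']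
  -- numeric hypotheses
  have hW1 : (1:ℝ) ≤ (Wq:ℝ) := by
    have := hW (m+1) le_rfl
    rw [hout] at this
    exact_mod_cast this
  have hn : ∀ ℓ ≤ m, (dims ℓ : ℝ) ≤ (Wq:ℝ) := fun ℓ hℓ => by
    exact_mod_cast hW ℓ (by omega)
  have hAm : ∀ ℓ < m, ∀ i j, |A ℓ i j| ≤ Rq := fun ℓ hℓ => hA ℓ (by omega)
  have hAm' : ∀ ℓ < m, ∀ i j, |A' ℓ i j| ≤ Rq := fun ℓ hℓ => hA' ℓ (by omega)
  have hdAm : ∀ ℓ < m, ∀ i j, |A ℓ i j - A' ℓ i j| ≤ εθ := fun ℓ hℓ => hdA ℓ (by omega)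
  have hdbm : ∀ ℓ < m, ∀ i, |b ℓ i - b' ℓ i| ≤ εθ := fun ℓ hℓ => hdb ℓ (by omega)
  set P : ℝ := (Rq * Wq) ^ m with hP
  have hP1 : (1:ℝ) ≤ P := one_le_pow₀ (by nlinarith)
  have hP0 : (0:ℝ) ≤ P := by linarith
  have hgs := fun p => grad_sum_le dims A b y p hR hW1 hn hAm m le_rfl
  have hgs' := fun p => grad_sum_le dims A' b' y p hR hW1 hn hAm' m le_rfl
  have hgd := fun p => grad_diff dims A A' b b' y p hR hW1 hεθ hyb hn hAm hAm' hdAm hdbm m le_rfl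
  -- per-coordinate bounds
  have habs : ∀ p, |g p| ≤ Rq * P := fun p =>
    abs_sum_mul_le _ _ (hA m (by omega) i0) (hgs p) (by linarith)
  have habs' : ∀ p, |g' p| ≤ Rq * P := fun p =>
    abs_sum_mul_le _ _ (hA' m (by omega) i0) (hgs' p) (by linarith)
  have hdg : ∀ p, |g p - g' p| ≤ ((m:ℝ)+1)^2 * P^2 * εθ := by
    intro p
    have h1 : |g p - g' p| ≤ εθ * P + Rq *
        ∑ j, |nnGrad dims A b y p m j - nnGrad dims A' b' y p m j| :=
      abs_sum_mul_sub_le _ _ _ _ (hA m (by omega) i0) (hdA m (by omega) i0)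
        (hgs' p) le_rfl (by linarith) hεθ
    have h2 := hgd p
    have h3 : εθ * P ≤ P^2 * εθ := by
      nlinarith [mul_nonneg hεθ (mul_nonneg hP0 (sub_nonneg.mpr hP1))]
    calc |g p - g' p| ≤ εθ * P + ((m:ℝ)^2 + 2*(m:ℝ)) * P^2 * εθ := by linarith
      _ ≤ P^2 * εθ + ((m:ℝ)^2 + 2*(m:ℝ)) * P^2 * εθ := by linarith
      _ = ((m:ℝ)+1)^2 * P^2 * εθ := by ring
  have hper : ∀ p, |g p ^ 2 - g' p ^ 2| ≤
      2 * ((m:ℝ)+1)^2 * (Rq * P) * P^2 * εθ := by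
    intro p
    have key : g p ^ 2 - g' p ^ 2 = (g p - g' p) * (g p + g' p) := by ring
    rw [key, abs_mul]
    have h4 : |g p + g' p| ≤ 2 * (Rq * P) :=
      (abs_add_le _ _).trans (by linarith [habs p, habs' p])
    have h5 : (0:ℝ) ≤ ((m:ℝ)+1)^2 * P^2 * εθ := by positivity
    calc |g p - g' p| * |g p + g' p| ≤ (((m:ℝ)+1)^2 * P^2 * εθ) * (2 * (Rq * P)) :=
          mul_le_mul (hdg p) h4 (abs_nonneg _) h5
      _ = 2 * ((m:ℝ)+1)^2 * (Rq * P) * P^2 * εθ := by ring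
  -- summation
  have hfinal : |∑ p, (g p)^2 - ∑ p, (g' p)^2| ≤
      (d:ℝ) * (2 * ((m:ℝ)+1)^2 * (Rq * P) * P^2 * εθ) := by
    calc |∑ p, (g p)^2 - ∑ p, (g' p)^2| = |∑ p, ((g p)^2 - (g' p)^2)| := by
          rw [Finset.sum_sub_distrib]
      _ ≤ ∑ p, |(g p)^2 - (g' p)^2| := Finset.abs_sum_le_sum_abs _ _
      _ ≤ (dims 0 : ℝ) * (2 * ((m:ℝ)+1)^2 * (Rq * P) * P^2 * εθ) := sum_le_card _ hper
      _ = (d:ℝ) * (2 * ((m:ℝ)+1)^2 * (Rq * P) * P^2 * εθ) := by rw [h0]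
  refine hfinal.trans (le_of_eq ?_)
  have hexp2 : 3 * (m+1) - 2 = 3*m + 1 := by omega
  have hexp3 : 3 * (m+1) - 3 = 3*m := by omega
  rw [hexp2, hexp3]
  have hpows : Rq * P * P^2 = Rq ^ (3*m+1) * (Wq:ℝ) ^ (3*m) := by
    have h6 : P * P^2 = ((Rq*Wq) ^ m)^3 := by rw [hP]; ring
    have h7 : ((Rq*(Wq:ℝ)) ^ m)^3 = Rq^(3*m) * (Wq:ℝ)^(3*m) := by
      rw [← pow_mul, Nat.mul_comm m 3, mul_pow]
    have h8 : Rq * (Rq^(3*m)) = Rq^(3*m+1) := by rw [pow_succ]; ring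
    calc Rq * P * P^2 = Rq * (P * P^2) := by ring
      _ = Rq * (Rq^(3*m) * (Wq:ℝ)^(3*m)) := by rw [h6, h7]
      _ = Rq^(3*m+1) * (Wq:ℝ)^(3*m) := by rw [← mul_assoc, h8]
  have hre : (d:ℝ) * (2 * ((m:ℝ)+1)^2 * (Rq * P) * P^2 * εθ) =
      2 * (d:ℝ) * ((m:ℝ)+1)^2 * (Rq * P * P^2) * εθ := by ring
  rw [hre, hpows]
  push_cast
  ring
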